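/- Let G=(V,E) be a directed graph with ranking r. If for every pair u,v the labels satisfy: whenever a trough shortest path from u to v exists with r(v)>r(u) then (v,dist_G(u,v)) ∈ L_out(u), and symmetrically for L_in — then for every pair (s,t) with finite dist_G(s,t), there exists a common pivot w with (w,dist_G(s,w)) ∈ L_out(s), (w,dist_G(w,t)) ∈ L_in(t), and dist_G(s,w)+dist_G(w,t)=dist_G(s,t); specifically w can be taken as the maximum-rank vertex on some shortest path from s to t. -/

import Mathlib

def IsPath {V : Type*} (E : V → V → Prop) (p : List V) (u v : V) : Prop :=
  List.Chain' E p ∧ p.head? = some u ∧ p.getLast? = some v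

def IsShortestPath {V : Type*} (E : V → V → Prop) (p : List V) (u v : V) : Prop :=
  IsPath E p u v ∧ ∀ q : List V, IsPath E q u v → p.length ≤ q.length

def Trough {V : Type*} (r : V → ℕ) (p : List V) (u v : V) : Prop :=
  ∀ x ∈ (p.drop 1).dropLast, r x < max (r u) (r v)

noncomputable def GDist {V : Type*} (E : V → V → Prop) (u v : V) : ℕ∞ :=
  sInf { n : ℕ∞ | ∃ p : List V, IsPath E p u v ∧ n = ((p.length - 1 : ℕ) : ℕ∞) }

/-!
Let `w` have maximal rank among the vertices lying on shortest `s`–`t` paths. An interior vertex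
of a shortest `s`–`w` (or `w`–`t`) path again lies on a shortest `s`–`t` path and differs from
`w`, so by injectivity of `r` its rank is below `r w`. Hence these shortest paths are trough paths,
and the labelling hypotheses give `(w, d(s, w)) ∈ L_out(s)` and `(w, d(w, t)) ∈ L_in(t)`; the
trivial labels `(u, 0)` cover `w = s` and `w = t`.
-/

lemma eq_and_eq_of_le_of_add_le {a b : ℕ∞} {m n : ℕ} (ha : a ≤ m) (hb : b ≤ n)
    (h : ((m + n : ℕ) : ℕ∞) ≤ a + b) : a = m ∧ b = n := by
  lift a to ℕ using ne_top_of_le_ne_top (ENat.natCast_ne_top m) ha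
  lift b to ℕ using ne_top_of_le_ne_top (ENat.natCast_ne_top n) hb
  norm_cast at *
  omega

lemma List.exists_getElem_of_mem_dropLast_drop_one {α : Type*} {l : List α} {x : α}
    (hx : x ∈ (l.drop 1).dropLast) : ∃ (i : ℕ) (hi : 0 < i ∧ i < l.length - 1), l[i] = x := by
  obtain ⟨i, hi, rfl⟩ := List.mem_iff_getElem.1 hx
  simp only [List.length_dropLast, List.length_drop] at hi
  exact ⟨i + 1, by omega, by simp [List.getElem_dropLast]⟩

section Paths

variable {V : Type*} {E : V → V → Prop} {p q : List V} {u v w : V}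

lemma IsPath.one_le_length (hp : IsPath E p u v) : 1 ≤ p.length := by
  obtain ⟨_, hhead, _⟩ := hp
  exact List.length_pos_iff.2 (by rintro rfl; simp at hhead)

lemma isPath_singleton (E : V → V → Prop) (u : V) : IsPath E [u] u u :=
  ⟨List.isChain_singleton u, rfl, rfl⟩

lemma IsPath.take (hp : IsPath E p u v) (i : ℕ) (hi : i < p.length) :
    IsPath E (p.take (i + 1)) u p[i] := by
  obtain ⟨hchain, hhead, _⟩ := hp
  refine ⟨hchain.take _, ?_, ?_⟩
  · rw [List.head?_take]; simpa using hhead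
  · rw [List.getLast?_take]; simp [hi]

lemma IsPath.drop (hp : IsPath E p u v) (i : ℕ) (hi : i < p.length) :
    IsPath E (p.drop i) p[i] v := by
  obtain ⟨hchain, _, hlast⟩ := hp
  refine ⟨hchain.drop _, ?_, ?_⟩
  · simp
  · rwa [List.getLast?_drop, if_neg (by omega)]

lemma IsPath.append (hp : IsPath E p u v) (hq : IsPath E q v w) :
    IsPath E (p ++ q.tail) u w ∧ (p ++ q.tail).length - 1 = (p.length - 1) + (q.length - 1) := by
  obtain ⟨hpc, hph, hpl⟩ := hp
  obtain ⟨hqc, hqh, hql⟩ := hq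
  obtain ⟨p', rfl⟩ := List.getLast?_eq_some_iff.1 hpl
  obtain ⟨q', rfl⟩ := List.head?_eq_some_iff.1 hqh
  refine ⟨⟨hpc.append_overlap hqc (List.cons_ne_nil v []), ?_, ?_⟩, ?_⟩
  · simpa using hph
  · simpa using hql
  · simp

end Paths

section Distance

variable {V : Type*} {E : V → V → Prop} {p : List V} {u v x : V}

lemma gdist_le_of_isPath (hp : IsPath E p u v) : GDist E u v ≤ ((p.length - 1 : ℕ) : ℕ∞) :=
  sInf_le ⟨p, hp, rfl⟩

lemma gdist_self (E : V → V → Prop) (u : V) : GDist E u u = 0 :=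
  nonpos_iff_eq_zero.1 <| by simpa using gdist_le_of_isPath (isPath_singleton E u)

lemma IsShortestPath.gdist_eq (hp : IsShortestPath E p u v) :
    GDist E u v = ((p.length - 1 : ℕ) : ℕ∞) := by
  refine le_antisymm (gdist_le_of_isPath hp.1) (le_sInf ?_)
  rintro _ ⟨q, hq, rfl⟩
  exact_mod_cast Nat.sub_le_sub_right (hp.2 q hq) 1

lemma exists_isShortestPath (h : GDist E u v ≠ ⊤) : ∃ p, IsShortestPath E p u v := by
  have hne : { n : ℕ∞ | ∃ p : List V, IsPath E p u v ∧ n = ((p.length - 1 : ℕ) : ℕ∞) }.Nonempty :=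
    Set.nonempty_iff_ne_empty.2 fun hempty => h (by rw [GDist, hempty, sInf_empty])
  obtain ⟨p, hp, hpd⟩ := csInf_mem hne
  refine ⟨p, hp, fun q hq => ?_⟩
  have hle : ((p.length - 1 : ℕ) : ℕ∞) ≤ ((q.length - 1 : ℕ) : ℕ∞) :=
    hpd ▸ gdist_le_of_isPath hq
  have := hp.one_le_length
  have := hq.one_le_length
  norm_cast at hle
  omega

lemma gdist_triangle (E : V → V → Prop) (u v w : V) :
    GDist E u w ≤ GDist E u v + GDist E v w := by
  rcases eq_or_ne (GDist E u v) ⊤ with huv | huv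
  · simp [huv]
  rcases eq_or_ne (GDist E v w) ⊤ with hvw | hvw
  · simp [hvw]
  obtain ⟨p, hp⟩ := exists_isShortestPath huv
  obtain ⟨q, hq⟩ := exists_isShortestPath hvw
  obtain ⟨hpq, hlen⟩ := hp.1.append hq.1
  calc GDist E u w ≤ (((p ++ q.tail).length - 1 : ℕ) : ℕ∞) := gdist_le_of_isPath hpq
    _ = GDist E u v + GDist E v w := by rw [hlen, hp.gdist_eq, hq.gdist_eq]; push_cast; rfl

lemma gdist_split_of_split_prefix {s t : V} (hx : GDist E s x + GDist E x v = GDist E s v)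
    (hv : GDist E s v + GDist E v t = GDist E s t) :
    GDist E s x + GDist E x t = GDist E s t := by
  refine le_antisymm ?_ (gdist_triangle E s x t)
  calc GDist E s x + GDist E x t ≤ GDist E s x + (GDist E x v + GDist E v t) := by
        gcongr; exact gdist_triangle E x v t
    _ = GDist E s t := by rw [← add_assoc, hx, hv]

lemma gdist_split_of_split_suffix {s t : V} (hx : GDist E v x + GDist E x t = GDist E v t)
    (hv : GDist E s v + GDist E v t = GDist E s t) :
    GDist E s x + GDist E x t = GDist E s t := by
  refine le_antisymm ?_ (gdist_triangle E s x t)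
  calc GDist E s x + GDist E x t ≤ (GDist E s v + GDist E v x) + GDist E x t := by
        gcongr; exact gdist_triangle E s v x
    _ = GDist E s t := by rw [add_assoc, hx, hv]

lemma IsShortestPath.gdist_split_of_mem_interior (hp : IsShortestPath E p u v)
    (hx : x ∈ (p.drop 1).dropLast) :
    x ≠ u ∧ x ≠ v ∧ GDist E u x + GDist E x v = GDist E u v := by
  obtain ⟨i, ⟨hi0, hi⟩, rfl⟩ := List.exists_getElem_of_mem_dropLast_drop_one hx
  have hprefix := gdist_le_of_isPath (hp.1.take i (by omega))
  have hsuffix := gdist_le_of_isPath (hp.1.drop i (by omega))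
  rw [List.length_take, min_eq_left (by omega), Nat.add_sub_cancel] at hprefix
  rw [List.length_drop] at hsuffix
  have htri := gdist_triangle E u p[i] v
  rw [hp.gdist_eq, show p.length - 1 = i + (p.length - i - 1) by omega] at htri
  obtain ⟨hu, hv⟩ := eq_and_eq_of_le_of_add_le hprefix hsuffix htri
  refine ⟨fun h => ?_, fun h => ?_, by rw [hu, hv, hp.gdist_eq]; norm_cast; omega⟩
  · rw [h, gdist_self] at hu
    norm_cast at hu
    omega
  · rw [h, gdist_self] at hv
    norm_cast at hv
    omega

lemma IsShortestPath.trough {r : V → ℕ} (hp : IsShortestPath E p u v)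
    (h : ∀ x, x ≠ u → x ≠ v → GDist E u x + GDist E x v = GDist E u v → r x < max (r u) (r v)) :
    Trough r p u v := fun x hx =>
  let ⟨hxu, hxv, hsplit⟩ := hp.gdist_split_of_mem_interior hx
  h x hxu hxv hsplit

end Distance

theorem stmt12 {V : Type*} (E : V → V → Prop) (r : V → ℕ) (hr : Function.Injective r)
    (Lout Lin : V → Set (V × ℕ))
    (htriv : ∀ u : V, (u, 0) ∈ Lout u ∧ (u, 0) ∈ Lin u)
    (hout : ∀ (u v : V) (p : List V), IsShortestPath E p u v → Trough r p u v →
      r u < r v → (v, p.length - 1) ∈ Lout u)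
    (hin : ∀ (u v : V) (p : List V), IsShortestPath E p u v → Trough r p u v →
      r v < r u → (u, p.length - 1) ∈ Lin v)
    (hmax : ∀ s t : V, GDist E s t ≠ ⊤ → ∃ vm : V,
      GDist E s vm + GDist E vm t = GDist E s t ∧
      ∀ w : V, GDist E s w + GDist E w t = GDist E s t → r w ≤ r vm) :
    ∀ s t : V, GDist E s t ≠ ⊤ → ∃ (w : V) (d1 d2 : ℕ),
      (w, d1) ∈ Lout s ∧ (w, d2) ∈ Lin t ∧
      (d1 : ℕ∞) = GDist E s w ∧ (d2 : ℕ∞) = GDist E w t ∧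
      (d1 : ℕ∞) + (d2 : ℕ∞) = GDist E s t ∧
      ∀ x : V, GDist E s x + GDist E x t = GDist E s t → r x ≤ r w := by
  intro s t hst
  obtain ⟨w, hsum, hw⟩ := hmax s t hst
  obtain ⟨hsw, hwt⟩ := WithTop.add_ne_top.1 (hsum ▸ hst)
  have hrank : ∀ x, x ≠ w → GDist E s x + GDist E x t = GDist E s t → r x < r w :=
    fun x hxw hx => (hw x hx).lt_of_ne (hr.ne hxw)
  obtain ⟨d1, hd1, hd1_eq⟩ : ∃ d1 : ℕ, (w, d1) ∈ Lout s ∧ (d1 : ℕ∞) = GDist E s w := by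
    rcases eq_or_ne s w with rfl | hsw'
    · exact ⟨0, (htriv s).1, (gdist_self E s).symm⟩
    obtain ⟨p, hp⟩ := exists_isShortestPath hsw
    refine ⟨_, hout s w p hp (hp.trough fun x _ hxw hx => ?_) (hrank s hsw' ?_), hp.gdist_eq.symm⟩
    · exact lt_max_of_lt_right (hrank x hxw (gdist_split_of_split_prefix hx hsum))
    · rw [gdist_self, zero_add]
  obtain ⟨d2, hd2, hd2_eq⟩ : ∃ d2 : ℕ, (w, d2) ∈ Lin t ∧ (d2 : ℕ∞) = GDist E w t := by
    rcases eq_or_ne t w with rfl | htw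
    · exact ⟨0, (htriv t).2, (gdist_self E t).symm⟩
    obtain ⟨q, hq⟩ := exists_isShortestPath hwt
    refine ⟨_, hin w t q hq (hq.trough fun x hxw _ hx => ?_) (hrank t htw ?_), hq.gdist_eq.symm⟩
    · exact lt_max_of_lt_left (hrank x hxw (gdist_split_of_split_suffix hx hsum))
    · rw [gdist_self, add_zero]
  exact ⟨w, d1, d2, hd1, hd2, hd1_eq, hd2_eq, by rw [hd1_eq, hd2_eq, hsum], hw⟩
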